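/- arXiv:2001.03936 — 2 statements merged into one kernel-verified Lean document; each statement's English description precedes it below -/
import Mathlib

section
/- For all n ∈ ℕ⁺, vectors a, x, y ∈ (ℝ≥0)^n and reals b, c ≥ 0, letting F = (∑_i a_i x_i + b)·(∑_i a_i y_i + c) and F_i = ((∑_j a_j)·x_i + b)·((∑_j a_j)·y_i + c), there exists an index i with F_i ≤ F. -/
/-!
Put `S = ∑ a`, `u i = S * x i + b`, `v i = S * y i + c`; then `∑ a i * u i = S * (∑ a x + b)`
and likewise for `v`, so `S² F = (∑ a u) (∑ a v)`. If `m` is the smallest product `u i * v i`,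
then `u i * v j + u j * v i ≥ 2 m` for all `i, j` (AM-GM, since the product of the two terms is
`(u i v i) (u j v j) ≥ m²`); summing with weights `a i a j` gives `S² m ≤ (∑ a u) (∑ a v)`,
hence `m ≤ F` once `S > 0`. If `S = 0` all weights vanish and both sides equal `b c`.
-/

open Finset

lemma two_mul_le_mul_add_mul_of_le_mul {m p q r s : ℝ} (hp : 0 ≤ p) (hq : 0 ≤ q) (hr : 0 ≤ r)
    (hs : 0 ≤ s) (hpq : m ≤ p * q) (hrs : m ≤ r * s) : 2 * m ≤ p * s + r * q := by
  rcases lt_or_ge m 0 with hm | hm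
  · nlinarith [mul_nonneg hp hs, mul_nonneg hr hq]
  · nlinarith [sq_nonneg (p * s - r * q), mul_le_mul hpq hrs hm (by positivity),
      mul_nonneg hp hs, mul_nonneg hr hq]

lemma sq_sum_mul_le_sum_mul_mul_sum_mul {ι : Type*} (t : Finset ι) {w u v : ι → ℝ} {m : ℝ}
    (hw : ∀ i ∈ t, 0 ≤ w i) (hu : ∀ i ∈ t, 0 ≤ u i) (hv : ∀ i ∈ t, 0 ≤ v i)
    (hm : ∀ i ∈ t, m ≤ u i * v i) :
    (∑ i ∈ t, w i) ^ 2 * m ≤ (∑ i ∈ t, w i * u i) * (∑ i ∈ t, w i * v i) := by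
  have hpair : ∀ i ∈ t, ∀ j ∈ t,
      w i * w j * (2 * m) ≤ w i * w j * (u i * v j + u j * v i) := fun i hi j hj =>
    mul_le_mul_of_nonneg_left
      (two_mul_le_mul_add_mul_of_le_mul (hu i hi) (hv i hi) (hu j hj) (hv j hj) (hm i hi) (hm j hj))
      (mul_nonneg (hw i hi) (hw j hj))
  have hsum := sum_le_sum fun i hi => sum_le_sum fun j hj => hpair i hi j hj
  have hswap : ∑ i ∈ t, ∑ j ∈ t, w i * w j * (u j * v i) =
      ∑ i ∈ t, ∑ j ∈ t, w i * w j * (u i * v j) := by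
    rw [sum_comm]
    exact sum_congr rfl fun i _ => sum_congr rfl fun j _ => by ring
  simp only [mul_add, sum_add_distrib, hswap] at hsum
  have hlhs : ∑ i ∈ t, ∑ j ∈ t, w i * w j * (2 * m) = 2 * ((∑ i ∈ t, w i) ^ 2 * m) := by
    rw [sq, sum_mul_sum, sum_mul, mul_sum]
    exact sum_congr rfl fun i _ => by rw [sum_mul, mul_sum]; exact sum_congr rfl fun j _ => by ring
  have hrhs : ∑ i ∈ t, ∑ j ∈ t, w i * w j * (u i * v j) =
      (∑ i ∈ t, w i * u i) * (∑ i ∈ t, w i * v i) := by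
    rw [sum_mul_sum]
    exact sum_congr rfl fun i _ => sum_congr rfl fun j _ => by ring
  linarith

lemma sum_mul_mul_add {ι : Type*} (t : Finset ι) (a x : ι → ℝ) (b : ℝ) :
    ∑ i ∈ t, a i * ((∑ j ∈ t, a j) * x i + b) = (∑ j ∈ t, a j) * (∑ i ∈ t, a i * x i + b) := by
  simp only [mul_add, sum_add_distrib, ← sum_mul, mul_sum, mul_left_comm (a _)]

theorem stmt4 (n : ℕ) (hn : 0 < n) (a x y : Fin n → ℝ) (b c : ℝ)
    (ha : ∀ i, 0 ≤ a i) (hx : ∀ i, 0 ≤ x i) (hy : ∀ i, 0 ≤ y i)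
    (hb : 0 ≤ b) (hc : 0 ≤ c) :
    ∃ i : Fin n, ((∑ j, a j) * x i + b) * ((∑ j, a j) * y i + c) ≤
      ((∑ i, a i * x i) + b) * ((∑ i, a i * y i) + c) := by
  set S := ∑ j, a j
  obtain ⟨i₀, -, hmin⟩ := exists_min_image univ
    (fun i => (S * x i + b) * (S * y i + c)) (univ_nonempty_iff.mpr ⟨⟨0, hn⟩⟩)
  refine ⟨i₀, ?_⟩
  rcases (sum_nonneg fun i _ => ha i : 0 ≤ S).eq_or_lt with hS | hS
  · have ha0 : ∀ i, a i = 0 := fun i =>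
      (sum_eq_zero_iff_of_nonneg fun i _ => ha i).mp hS.symm i (mem_univ i)
    simp [S, ha0]
  · have key := sq_sum_mul_le_sum_mul_mul_sum_mul univ (w := a) (fun i _ => ha i)
      (fun i _ => add_nonneg (mul_nonneg hS.le (hx i)) hb)
      (fun i _ => add_nonneg (mul_nonneg hS.le (hy i)) hc) (fun i hi => hmin i hi)
    rw [sum_mul_mul_add, sum_mul_mul_add, mul_mul_mul_comm, ← sq] at key
    exact le_of_mul_le_mul_left key (by positivity)
end

section
/- Let C ≥ 1 and 0 < p ≤ C/n for a positive integer n ≥ 2. For t with 1 ≤ t ≤ n/2, the quantity p·(1−p/C)^{t−1}·((1−p/C)^{n−t} − (1−2p/C)^{n−t})·x is at least x·p²·n/(4e²·C), for any x ∈ (0,1]. -/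
open Real

/-!
Write `q = p / C`, so that `q n ≤ 1` and `q ≤ 1/2`. The informed-node factor satisfies
`(1 - q)^(n-1) ≥ e^{-2 q (n-1)} ≥ e^{-2}`. For the difference, `1 - 2q ≤ (1 - q) e^{-q}` gives
`(1 - q)^m - (1 - 2q)^m ≥ (1 - q)^m (1 - e^{-q m}) ≥ (1 - q)^m q m / 2` with `m = n - t ≥ n/2`,
using `1 - e^{-z} ≥ z/2` on `[0, 1]`.
-/

lemma exp_neg_two_mul_le_one_sub {q : ℝ} (hq0 : 0 ≤ q) (hq : q ≤ 1 / 2) :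
    exp (-(2 * q)) ≤ 1 - q := by
  rw [exp_neg, inv_le_iff_one_le_mul₀' (exp_pos _)]
  nlinarith [add_one_le_exp (2 * q)]

lemma exp_neg_two_mul_le_one_sub_pow {q : ℝ} (hq0 : 0 ≤ q) (hq : q ≤ 1 / 2) (k : ℕ) :
    exp (-(2 * q * k)) ≤ (1 - q) ^ k := by
  calc exp (-(2 * q * k)) = exp (-(2 * q)) ^ k := by rw [← exp_nat_mul]; ring_nf
    _ ≤ (1 - q) ^ k := pow_le_pow_left₀ (exp_pos _).le (exp_neg_two_mul_le_one_sub hq0 hq) k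

lemma half_le_one_sub_exp_neg {z : ℝ} (hz0 : 0 ≤ z) (hz1 : z ≤ 1) : z / 2 ≤ 1 - exp (-z) := by
  have h : exp (-z) ≤ 1 - z / 2 := by
    rw [exp_neg, inv_le_iff_one_le_mul₀' (exp_pos _)]
    nlinarith [add_one_le_exp z]
  linarith

lemma one_sub_two_mul_pow_le {q : ℝ} (hq : q ≤ 1 / 2) (m : ℕ) :
    (1 - 2 * q) ^ m ≤ (1 - q) ^ m * exp (-(q * m)) := by
  have hbase : 1 - 2 * q ≤ (1 - q) * exp (-q) := by
    nlinarith [mul_le_mul_of_nonneg_left (one_sub_le_exp_neg q) (by linarith : (0 : ℝ) ≤ 1 - q),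
      sq_nonneg q]
  calc (1 - 2 * q) ^ m ≤ ((1 - q) * exp (-q)) ^ m := pow_le_pow_left₀ (by linarith) hbase m
    _ = (1 - q) ^ m * exp (-(q * m)) := by rw [mul_pow, ← exp_nat_mul]; ring_nf

lemma one_sub_pow_mul_le_one_sub_pow_sub {q : ℝ} (hq0 : 0 ≤ q) (hq : q ≤ 1 / 2) {m : ℕ}
    (hqm : q * m ≤ 1) :
    (1 - q) ^ m * (q * m / 2) ≤ (1 - q) ^ m - (1 - 2 * q) ^ m := by
  have hpow : 0 ≤ (1 - q) ^ m := pow_nonneg (by linarith) m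
  calc (1 - q) ^ m * (q * m / 2) ≤ (1 - q) ^ m * (1 - exp (-(q * m))) :=
        mul_le_mul_of_nonneg_left (half_le_one_sub_exp_neg (by positivity) hqm) hpow
    _ ≤ (1 - q) ^ m - (1 - 2 * q) ^ m := by nlinarith [one_sub_two_mul_pow_le hq m]

theorem stmt10_general (C : ℝ) (n : ℕ) (p : ℝ)
    (hp : 0 < p) (hpn : p ≤ C / n) (t : ℕ) (ht1 : 1 ≤ t)
    (ht2 : (t : ℝ) ≤ (n : ℝ) / 2) (x : ℝ) (hx0 : 0 < x) :
    x * p ^ 2 * n / (4 * Real.exp 2 * C) ≤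
      p * (1 - p / C) ^ (t - 1) *
        ((1 - p / C) ^ (n - t) - (1 - 2 * p / C) ^ (n - t)) * x := by
  obtain ⟨hC, hn⟩ : 0 < C ∧ 0 < (n : ℝ) := by
    rcases div_pos_iff.mp (hp.trans_le hpn) with h | ⟨-, h⟩
    · exact h
    · exact absurd h (Nat.cast_nonneg n).not_gt
  set q := p / C with hq
  have hqn : q * n ≤ 1 := by
    rw [hq, div_mul_eq_mul_div, div_le_one hC]
    rwa [le_div_iff₀ hn] at hpn
  have hq0 : 0 ≤ q := by positivity
  have hn2 : (2 : ℝ) ≤ n := by linarith [show (1 : ℝ) ≤ t by exact_mod_cast ht1]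
  have hq2 : q ≤ 1 / 2 := by nlinarith
  have hq1 : 0 < 1 - q := by linarith
  have htn : t ≤ n := by exact_mod_cast (show (t : ℝ) ≤ n by linarith)
  have hm : (n : ℝ) / 2 ≤ ((n - t : ℕ) : ℝ) := by rw [Nat.cast_sub htn]; linarith
  have hqm : q * (n - t : ℕ) ≤ 1 := by
    nlinarith [show ((n - t : ℕ) : ℝ) ≤ n by exact_mod_cast Nat.sub_le n t]
  have hfactor : exp (-2) ≤ (1 - q) ^ (t - 1) * (1 - q) ^ (n - t) := by
    rw [← pow_add]
    refine le_trans (exp_le_exp.mpr ?_) (exp_neg_two_mul_le_one_sub_pow hq0 hq2 _)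
    have hk : ((t - 1 + (n - t) : ℕ) : ℝ) ≤ n := by exact_mod_cast (by omega : t - 1 + (n - t) ≤ n)
    nlinarith
  rw [show 2 * p / C = 2 * q by rw [hq, mul_div_assoc]]
  calc x * p ^ 2 * n / (4 * exp 2 * C) = p * exp (-2) * (q * (n / 2) / 2) * x := by
        rw [exp_neg, hq]; field_simp; ring
    _ ≤ p * ((1 - q) ^ (t - 1) * (1 - q) ^ (n - t)) * (q * (n - t : ℕ) / 2) * x := by gcongr
    _ = p * (1 - q) ^ (t - 1) * ((1 - q) ^ (n - t) * (q * (n - t : ℕ) / 2)) * x := by ring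
    _ ≤ p * (1 - q) ^ (t - 1) * ((1 - q) ^ (n - t) - (1 - 2 * q) ^ (n - t)) * x := by
        gcongr
        exact one_sub_pow_mul_le_one_sub_pow_sub hq0 hq2 hqm

theorem stmt10 (C : ℝ) (hC : 1 ≤ C) (n : ℕ) (hn : 2 ≤ n) (p : ℝ)
    (hp : 0 < p) (hpn : p ≤ C / n) (t : ℕ) (ht1 : 1 ≤ t)
    (ht2 : (t : ℝ) ≤ (n : ℝ) / 2) (x : ℝ) (hx0 : 0 < x) (hx1 : x ≤ 1) :
    x * p ^ 2 * n / (4 * Real.exp 2 * C) ≤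
      p * (1 - p / C) ^ (t - 1) *
        ((1 - p / C) ^ (n - t) - (1 - 2 * p / C) ^ (n - t)) * x :=
  stmt10_general C n p hp hpn t ht1 ht2 x hx0
end
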